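/- Let 1 ≤ k1 ≤ t1 ≤ min(n1, m), 1 ≤ k2 ≤ t2 ≤ min(n2, m), t1·t2 ≤ m, and t1 − k1 ≤ t2 − k2. Let g1 ∈ L^{n1} with wt_R(g1) = t1 and g2 ∈ L^{n2} with wt_R(g2) = t2, and let C be the row space of Moore(g1,k1) ⊗ Moore(g2,k2). Let r be a natural number with 2r ≤ t2 − k2. Then for every vector y indexed by {1..n1}×{1..n2} with entries in L and all codewords c, c' ∈ C with wt_R(y − c) ≤ r and wt_R(y − c') ≤ r, one has c = c'. (That is, the extended Gabidulin–Kronecker product code corrects every error of rank weight within half of its guaranteed minimum-distance lower bound t2 − k2 + 1 uniquely.) -/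

import Mathlib

open Matrix Kronecker

/-- Rank weight of a vector over the extension `L` of the base field `K`. -/
noncomputable def rankWeight (K : Type*) {L : Type*} [Field K] [Field L] [Algebra K L]
    {ι : Type*} (v : ι → L) : ℕ :=
  Module.finrank K (Submodule.span K (Set.range v))

/-- The `k × n` Moore matrix of `g`: entry `(i, j)` is `g j ^ q ^ i`. -/
def moore (q : ℕ) {L : Type*} [Field L] {n : ℕ} (g : Fin n → L) (k : ℕ) :
    Matrix (Fin k) (Fin n) L :=
  Matrix.of fun i j => g j ^ q ^ (i : ℕ)

/-!
A nonzero codeword `x ᵥ* (M₁ ⊗ₖ M₂)` has a nonzero row `j₁`, and that row is `ψ ∘ g₂` for the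
`q`-linearized polynomial `ψ = ∑ bᵢ X ^ q ^ i` (`i < k₂`) with `bᵢ = ∑ x (i', i) g₁ j₁ ^ q ^ i'`.
Since `ψ` is `K`-linear, its kernel is a `K`-subspace consisting of roots of a nonzero polynomial
of degree `< q ^ k₂`, so it has dimension `< k₂`. Hence `ψ` maps `Supp g₂` onto a subspace of
`Supp c` of dimension `> t₂ - k₂`: the code has minimum rank distance `> t₂ - k₂ ≥ 2 r`, and the
triangle inequality for the rank weight gives uniqueness.
-/

open Module Polynomial

theorem Matrix.vecMul_kronecker_apply {R l m n p : Type*} [CommSemiring R] [Fintype l]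
    [Fintype n] (x : l × n → R) (A : Matrix l m R) (B : Matrix n p R) (j : m × p) :
    (x ᵥ* (A ⊗ₖ B)) j = ((fun i₂ => ∑ i₁, x (i₁, i₂) * A i₁ j.1) ᵥ* B) j.2 := by
  simp only [vecMul, dotProduct, kroneckerMap_apply, Fintype.sum_prod_type, Finset.sum_mul,
    mul_assoc]
  exact Finset.sum_comm

section RankWeight

variable (K : Type*) {L ι : Type*} [Field K] [Field L] [Algebra K L] [Finite ι]

instance finiteDimensional_span_range (v : ι → L) :
    FiniteDimensional K (Submodule.span K (Set.range v)) :=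
  FiniteDimensional.span_of_finite K (Set.finite_range v)

theorem rankWeight_comp_le {ι' : Type*} (v : ι → L) (e : ι' → ι) :
    rankWeight K (v ∘ e) ≤ rankWeight K v :=
  Submodule.finrank_mono (Submodule.span_mono (Set.range_comp_subset_range e v))

theorem rankWeight_sub_le (u v : ι → L) :
    rankWeight K (u - v) ≤ rankWeight K u + rankWeight K v := by
  have hspan : Submodule.span K (Set.range (u - v)) ≤
      Submodule.span K (Set.range u) ⊔ Submodule.span K (Set.range v) := by
    rw [Submodule.span_le]
    rintro _ ⟨i, rfl⟩
    exact sub_mem (Submodule.mem_sup_left (Submodule.subset_span ⟨i, rfl⟩))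
      (Submodule.mem_sup_right (Submodule.subset_span ⟨i, rfl⟩))
  exact (Submodule.finrank_mono hspan).trans (Submodule.finrank_add_le_finrank_add_finrank _ _)

end RankWeight

section LinearizedPoly

variable {R : Type*} [CommRing R] (q : ℕ) {k : ℕ}

noncomputable def linearizedPoly (b : Fin k → R) : R[X] :=
  ∑ i, C (b i) * X ^ q ^ (i : ℕ)

theorem eval_linearizedPoly (b : Fin k → R) (v : R) :
    (linearizedPoly q b).eval v = ∑ i, b i * v ^ q ^ (i : ℕ) := by
  simp [linearizedPoly, eval_finsetSum]

variable {q}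

theorem coeff_linearizedPoly_pow (hq : 1 < q) (b : Fin k → R) (i : Fin k) :
    (linearizedPoly q b).coeff (q ^ (i : ℕ)) = b i := by
  rw [linearizedPoly, finsetSum_coeff, Finset.sum_eq_single i]
  · simp
  · intro j _ hji
    simp [coeff_C_mul, coeff_X_pow, (Nat.pow_right_injective hq).ne (Fin.val_injective.ne hji.symm)]
  · simp

theorem linearizedPoly_ne_zero (hq : 1 < q) {b : Fin k → R} (hb : b ≠ 0) :
    linearizedPoly q b ≠ 0 := by
  obtain ⟨i, hi⟩ := Function.ne_iff.mp hb
  intro h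
  exact hi (by rw [← coeff_linearizedPoly_pow hq b i, h, coeff_zero]; rfl)

theorem degree_linearizedPoly_lt (hq : 1 < q) (b : Fin k → R) :
    (linearizedPoly q b).degree < (q ^ k : ℕ) := by
  rw [← mem_degreeLT]
  refine Submodule.sum_mem _ fun i _ => mem_degreeLT.mpr ?_
  refine (degree_C_mul_X_pow_le _ _).trans_lt ?_
  exact_mod_cast Nat.pow_lt_pow_right hq i.isLt

end LinearizedPoly

section LinearizedMap

variable (K : Type*) {L : Type*} [Field K] [Fintype K] [Field L] [Algebra K L] {k : ℕ}

noncomputable def linearizedMap (b : Fin k → L) : L →ₗ[K] L :=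
  ∑ i, LinearMap.mulLeft K (b i) ∘ₗ (FiniteField.frobeniusAlgHom K L ^ (i : ℕ)).toLinearMap

theorem linearizedMap_apply (b : Fin k → L) (v : L) :
    linearizedMap K b v = (linearizedPoly (Fintype.card K) b).eval v := by
  simp [linearizedMap, eval_linearizedPoly, AlgHom.coe_pow, FiniteField.coe_frobeniusAlgHom,
    pow_iterate]

theorem finrank_lt_of_le_ker_linearizedMap {b : Fin k → L} (hb : b ≠ 0) {W : Submodule K L}
    [FiniteDimensional K W] (hW : W ≤ LinearMap.ker (linearizedMap K b)) :
    finrank K W < k := by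
  have hq : 1 < Fintype.card K := Fintype.one_lt_card
  have hP := linearizedPoly_ne_zero hq hb
  have : Finite W := Module.finite_of_finite K
  have hW_fin := (W : Set L).toFinite
  have hZ : hW_fin.toFinset.val ⊆ (linearizedPoly (Fintype.card K) b).roots := fun v hv => by
    rw [mem_roots hP, IsRoot.def, ← linearizedMap_apply]
    exact hW (hW_fin.mem_toFinset.mp hv)
  have hcard : Fintype.card K ^ finrank K W < Fintype.card K ^ k := calc
    Fintype.card K ^ finrank K W = hW_fin.toFinset.card := by
      rw [← Nat.card_eq_fintype_card, ← natCard_eq_pow_finrank]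
      exact Nat.card_eq_card_finite_toFinset hW_fin
    _ ≤ (linearizedPoly (Fintype.card K) b).natDegree := card_le_degree_of_subset_roots hZ
    _ < Fintype.card K ^ k := (natDegree_lt_iff_degree_lt hP).mpr (degree_linearizedPoly_lt hq b)
  exact (Nat.pow_lt_pow_iff_right hq).mp hcard

variable {K}

theorem rankWeight_lt_rankWeight_linearizedMap_comp_add {b : Fin k → L} (hb : b ≠ 0) {ι : Type*}
    [Finite ι] (g : ι → L) : rankWeight K g < rankWeight K (linearizedMap K b ∘ g) + k := by
  unfold rankWeight
  set V := Submodule.span K (Set.range g)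
  set φ := (linearizedMap K b).domRestrict V
  have hrange : LinearMap.range φ = Submodule.span K (Set.range (linearizedMap K b ∘ g)) := by
    rw [LinearMap.range_domRestrict, Submodule.map_span, Set.range_comp]
  have hker : finrank K (LinearMap.ker φ) < k := by
    rw [← Submodule.finrank_map_subtype_eq]
    refine finrank_lt_of_le_ker_linearizedMap K hb ?_
    rintro _ ⟨w, hw, rfl⟩
    exact hw
  have := φ.finrank_range_add_finrank_ker
  rw [hrange] at this
  omega

theorem vecMul_moore_card (b : Fin k → L) {n : ℕ} (g : Fin n → L) :
    b ᵥ* moore (Fintype.card K) g k = linearizedMap K b ∘ g := by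
  ext j
  simp [vecMul, dotProduct, moore, linearizedMap_apply, eval_linearizedPoly]

theorem rankWeight_lt_rankWeight_vecMul_kronecker_moore_add {n₁ k₁ n₂ k₂ : ℕ} (g₁ : Fin n₁ → L)
    (g₂ : Fin n₂ → L) {x : Fin k₁ × Fin k₂ → L}
    (hx : x ᵥ* (moore (Fintype.card K) g₁ k₁ ⊗ₖ moore (Fintype.card K) g₂ k₂) ≠ 0) :
    rankWeight K g₂ <
      rankWeight K (x ᵥ* (moore (Fintype.card K) g₁ k₁ ⊗ₖ moore (Fintype.card K) g₂ k₂)) + k₂ := by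
  set c := x ᵥ* (moore (Fintype.card K) g₁ k₁ ⊗ₖ moore (Fintype.card K) g₂ k₂)
  obtain ⟨⟨j₁, j₂⟩, hj⟩ := Function.ne_iff.mp hx
  set b := fun i₂ => ∑ i₁, x (i₁, i₂) * moore (Fintype.card K) g₁ k₁ i₁ j₁
  have hrow : c ∘ Prod.mk j₁ = linearizedMap K b ∘ g₂ := by
    rw [← vecMul_moore_card]
    ext j
    exact vecMul_kronecker_apply x _ _ (j₁, j)
  have hb : b ≠ 0 := by
    rintro hb
    apply hj
    simpa [hb, linearizedMap] using congrFun hrow j₂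
  calc rankWeight K g₂ < rankWeight K (linearizedMap K b ∘ g₂) + k₂ :=
        rankWeight_lt_rankWeight_linearizedMap_comp_add hb g₂
    _ ≤ rankWeight K c + k₂ := by
        rw [← hrow]
        exact Nat.add_le_add_right (rankWeight_comp_le K c _) _

end LinearizedMap

theorem egk_unique_decoding_case2_general
    (q n1 k1 n2 k2 t2 r : ℕ)
    (K L : Type*) [Field K] [Fintype K] [Field L] [Algebra K L]
    (hq : Fintype.card K = q)
    (hk2t2 : k2 ≤ t2)
    (g1 : Fin n1 → L)
    (g2 : Fin n2 → L) (hg2 : rankWeight K g2 = t2)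
    (hr : 2 * r ≤ t2 - k2) :
    ∀ y c c' : Fin n1 × Fin n2 → L,
      (∃ x : Fin k1 × Fin k2 → L, c = x ᵥ* (moore q g1 k1 ⊗ₖ moore q g2 k2)) →
      (∃ x : Fin k1 × Fin k2 → L, c' = x ᵥ* (moore q g1 k1 ⊗ₖ moore q g2 k2)) →
      rankWeight K (y - c) ≤ r → rankWeight K (y - c') ≤ r → c = c' := by
  rintro y c c' ⟨x, rfl⟩ ⟨x', rfl⟩ hyc hyc'
  subst hq
  by_contra hne
  have hmin := rankWeight_lt_rankWeight_vecMul_kronecker_moore_add g1 g2 (x := x - x')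
    (by rwa [sub_vecMul, sub_ne_zero])
  set G := moore (Fintype.card K) g1 k1 ⊗ₖ moore (Fintype.card K) g2 k2
  have htri := rankWeight_sub_le K (y - x' ᵥ* G) (y - x ᵥ* G)
  rw [sub_sub_sub_cancel_left, ← sub_vecMul] at htri
  omega

theorem egk_unique_decoding_case2
    (q m n1 k1 n2 k2 t1 t2 r : ℕ)
    (K L : Type*) [Field K] [Fintype K] [Field L] [Algebra K L]
    (hq : Fintype.card K = q) (hm : Module.finrank K L = m)
    (hk1pos : 1 ≤ k1) (hk1t1 : k1 ≤ t1) (ht1 : t1 ≤ min n1 m)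
    (hk2pos : 1 ≤ k2) (hk2t2 : k2 ≤ t2) (ht2 : t2 ≤ min n2 m)
    (htm : t1 * t2 ≤ m) (hd : t1 - k1 ≤ t2 - k2)
    (g1 : Fin n1 → L) (hg1 : rankWeight K g1 = t1)
    (g2 : Fin n2 → L) (hg2 : rankWeight K g2 = t2)
    (hr : 2 * r ≤ t2 - k2) :
    ∀ y c c' : Fin n1 × Fin n2 → L,
      (∃ x : Fin k1 × Fin k2 → L, c = x ᵥ* (moore q g1 k1 ⊗ₖ moore q g2 k2)) →
      (∃ x : Fin k1 × Fin k2 → L, c' = x ᵥ* (moore q g1 k1 ⊗ₖ moore q g2 k2)) →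
      rankWeight K (y - c) ≤ r → rankWeight K (y - c') ≤ r → c = c' :=
  egk_unique_decoding_case2_general q n1 k1 n2 k2 t2 r K L hq hk2t2 g1 g2 hg2 hr
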